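/- Let (g,·) be a finite-dimensional pre-Lie algebra and let r1, r2 ∈ Sym²(g) be compatible s-matrices such that r2♯ : g* → g is invertible. Then N = r1♯ ∘ (r2♯)⁻¹ : g → g is a Nijenhuis operator on (g,·). If moreover r1♯ is also invertible, then, defining B(x,y) = ⟨x, (r1♯)⁻¹(y)⟩, the pair (B,N) is a pseudo-Hessian-Nijenhuis structure on (g,·). -/
import Mathlib


variable {K : Type*} [Field K] [CharZero K]
variable {g : Type*} [AddCommGroup g] [Module K g]

/-- The pre-Lie identity for a bilinear multiplication. -/
def IsPreLie (mul : g →ₗ[K] g →ₗ[K] g) : Prop :=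
  ∀ x y z : g, mul (mul x y) z - mul x (mul y z) = mul (mul y x) z - mul y (mul x z)

/-- A Nijenhuis operator on a pre-Lie algebra. -/
def IsNijenhuis (mul : g →ₗ[K] g →ₗ[K] g) (N : g →ₗ[K] g) : Prop :=
  ∀ x y : g, mul (N x) (N y) = N (mul (N x) y + mul x (N y) - N (mul x y))

/-- The `s`-matrix (solution of the `S`-equation) condition for `r` with `r♯ = rs`. -/
def IsSMatrix (mul : g →ₗ[K] g →ₗ[K] g) (rs : Module.Dual K g →ₗ[K] g) : Prop :=
  ∀ ξ η ζ : Module.Dual K g,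
    -(ξ (mul (rs η) (rs ζ))) + η (mul (rs ξ) (rs ζ))
      + ζ (mul (rs ξ) (rs η) - mul (rs η) (rs ξ)) = 0

/-- Compatibility of two `s`-matrices, expressed via `r₁♯, r₂♯`. -/
def SCompat (mul : g →ₗ[K] g →ₗ[K] g) (r₁s r₂s : Module.Dual K g →ₗ[K] g) : Prop :=
  ∀ ξ η ζ : Module.Dual K g,
    -(ξ (mul (r₁s η) (r₂s ζ) + mul (r₂s η) (r₁s ζ)))
      + η (mul (r₁s ξ) (r₂s ζ) + mul (r₂s ξ) (r₁s ζ))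
      + ζ ((mul (r₁s ξ) (r₂s η) - mul (r₂s η) (r₁s ξ))
            + (mul (r₂s ξ) (r₁s η) - mul (r₁s η) (r₂s ξ))) = 0

/-- A pseudo-Hessian structure: a symmetric nondegenerate 2-cocycle. -/
def IsPseudoHessian (mul : g →ₗ[K] g →ₗ[K] g) (B : g → g → K) : Prop :=
  (∀ x y : g, B x y = B y x) ∧
  (∀ x : g, (∀ y : g, B x y = 0) → x = 0) ∧
  (∀ x y z : g, B (mul x y) z - B x (mul y z) = B (mul y x) z - B y (mul x z))

/-- A pseudo-Hessian-Nijenhuis structure (with the operator as an invertible linear map). -/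
def IsPseudoHessianNijenhuis (mul : g →ₗ[K] g →ₗ[K] g) (B : g → g → K)
    (N : g →ₗ[K] g) : Prop :=
  IsPseudoHessian mul B ∧
  Function.Bijective N ∧
  IsNijenhuis mul N ∧
  (∀ x y : g, B (N x) y = B x (N y)) ∧
  (∀ x y z : g,
    B (mul x y) (N z) - B x (N (mul y z)) = B (mul y x) (N z) - B y (N (mul x z)))

/-- Compatible `s`-matrices with `r₂♯` invertible give the Nijenhuis operator
`N = r₁♯ ∘ (r₂♯)⁻¹`; if also `r₁♯` is invertible then `(B, N)` with
`B(x,y) = ⟨x, (r₁♯)⁻¹(y)⟩` is a pseudo-Hessian-Nijenhuis structure. -/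
theorem compatible_sMatrices_give_pseudoHessianNijenhuis [FiniteDimensional K g]
    (mul : g →ₗ[K] g →ₗ[K] g) (hmul : IsPreLie mul)
    (r₁s r₂s : Module.Dual K g →ₗ[K] g)
    (hsym₁ : ∀ ξ η : Module.Dual K g, η (r₁s ξ) = ξ (r₁s η))
    (hsym₂ : ∀ ξ η : Module.Dual K g, η (r₂s ξ) = ξ (r₂s η))
    (hs₁ : IsSMatrix mul r₁s) (hs₂ : IsSMatrix mul r₂s)
    (hc : SCompat mul r₁s r₂s)
    (i₂ : g →ₗ[K] Module.Dual K g)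
    (hi₂a : r₂s ∘ₗ i₂ = LinearMap.id) (hi₂b : i₂ ∘ₗ r₂s = LinearMap.id) :
    IsNijenhuis mul (r₁s ∘ₗ i₂) ∧
    (∀ i₁ : g →ₗ[K] Module.Dual K g,
      r₁s ∘ₗ i₁ = LinearMap.id → i₁ ∘ₗ r₁s = LinearMap.id →
      IsPseudoHessianNijenhuis mul (fun x y => i₁ y x) (r₁s ∘ₗ i₂)) := by
  have e₂ : ∀ w : g, r₂s (i₂ w) = w := fun w => by
    simpa using LinearMap.congr_fun hi₂a w
  have e₂' : ∀ μ : Module.Dual K g, i₂ (r₂s μ) = μ := fun μ => by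
    simpa using LinearMap.congr_fun hi₂b μ
  have key : ∀ (ζ : Module.Dual K g) (v : g), ζ (r₁s (i₂ v)) = (i₂ (r₁s ζ)) v := by
    intro ζ v
    rw [hsym₁ (i₂ v) ζ]
    conv_lhs => rw [← e₂ (r₁s ζ)]
    rw [hsym₂ (i₂ (r₁s ζ)) (i₂ v), e₂]
  have hN : IsNijenhuis mul (r₁s ∘ₗ i₂) := by
    intro x y
    rw [← sub_eq_zero, ← Module.forall_dual_apply_eq_zero_iff K]
    intro ζ
    have H1 := hs₁ (i₂ x) ζ (i₂ y)
    have H2 := hs₂ (i₂ x) (i₂ (r₁s (i₂ (r₁s ζ)))) (i₂ y)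
    have H3 := hc (i₂ x) (i₂ (r₁s ζ)) (i₂ y)
    simp only [LinearMap.comp_apply, map_add, map_sub, key, e₂] at H1 H2 H3 ⊢
    linear_combination H2 - H3 + H1
  refine ⟨hN, fun i₁ hi₁a hi₁b => ?_⟩
  have e₁ : ∀ w : g, r₁s (i₁ w) = w := fun w => by
    simpa using LinearMap.congr_fun hi₁a w
  have e₁' : ∀ μ : Module.Dual K g, i₁ (r₁s μ) = μ := fun μ => by
    simpa using LinearMap.congr_fun hi₁b μ
  have bsym₁ : ∀ u v : g, (i₁ u) v = (i₁ v) u := fun u v => by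
    have h := hsym₁ (i₁ v) (i₁ u)
    rwa [e₁, e₁] at h
  have bsym₂ : ∀ u v : g, (i₂ u) v = (i₂ v) u := fun u v => by
    have h := hsym₂ (i₂ v) (i₂ u)
    rwa [e₂, e₂] at h
  refine ⟨⟨fun x y => bsym₁ y x, ?_, ?_⟩, ?_, hN, ?_, ?_⟩
  · -- nondegeneracy
    intro x hx
    have h : i₁ x = 0 := by
      ext y
      simpa [bsym₁ x y] using hx y
    have := e₁ x
    rw [h, map_zero] at this
    exact this.symm
  · -- cocycle for B
    intro x y z
    have H := hs₁ (i₁ x) (i₁ y) (i₁ z)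
    simp only [map_sub, e₁] at H
    linear_combination H - bsym₁ (mul y z) x + bsym₁ (mul x z) y
  · -- bijectivity of N
    have h1 : Function.Bijective r₁s :=
      Function.bijective_iff_has_inverse.mpr ⟨i₁, e₁', e₁⟩
    have h2 : Function.Bijective i₂ :=
      Function.bijective_iff_has_inverse.mpr ⟨r₂s, e₂, e₂'⟩
    rw [LinearMap.coe_comp]
    exact h1.comp h2
  · -- B(Nx,y) = B(x,Ny)
    intro x y
    simp only [LinearMap.comp_apply, e₁']
    have h := hsym₁ (i₂ x) (i₁ y)
    rw [e₁] at h
    rw [h]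
    exact bsym₂ x y
  · -- cocycle for B₁
    intro x y z
    simp only [LinearMap.comp_apply, e₁']
    have H := hs₂ (i₂ x) (i₂ y) (i₂ z)
    simp only [map_sub, e₂] at H
    linear_combination H - bsym₂ (mul y z) x + bsym₂ (mul x z) y
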